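/- arXiv:2401.04699 — 5 statements merged into one kernel-verified Lean document; each statement's English description precedes it below -/
import Mathlib

section
/- Let A = [0, x-1] ∪ [x+r, y] be a set of integers with x ≥ 2, r ≥ 0, x + r ≤ y - 1, and |A| ≥ 4. If h ≥ r + 1, then the h-fold sumset hA equals the interval [0, hy]. -/
open Finset Pointwise

/-- The `h`-fold sumset: all sums of `h` elements of `A` (with repetition). -/
def hfold : ℕ → Finset ℤ → Finset ℤ
  | 0, _ => {0}
  | n + 1, A => A + hfold n A

lemma IccAddIcc (a b c d : ℤ) (hab : a ≤ b) (hcd : c ≤ d) :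
    Icc a b + Icc c d = Icc (a + c) (b + d) := by
  ext n
  simp only [Finset.mem_add, mem_Icc]
  constructor
  · rintro ⟨u, ⟨hu1, hu2⟩, v, ⟨hv1, hv2⟩, rfl⟩
    omega
  · rintro ⟨h1, h2⟩
    exact ⟨max a (n - d), by omega, n - max a (n - d), by omega, by omega⟩

lemma hfold_Icc (k : ℕ) (a b : ℤ) (hab : a ≤ b) :
    hfold k (Icc a b) = Icc ((k : ℤ) * a) ((k : ℤ) * b) := by
  induction k with
  | zero => simp [hfold]
  | succ n ih =>
      rw [hfold, ih, IccAddIcc a b _ _ hab (by nlinarith [Int.natCast_nonneg n])]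
      push_cast
      ring_nf

lemma hfold_mono (k : ℕ) {A B : Finset ℤ} (hAB : A ⊆ B) :
    hfold k A ⊆ hfold k B := by
  induction k with
  | zero => simp [hfold]
  | succ n ih => exact Finset.add_subset_add hAB ih

lemma hfold_add (a b : ℕ) (A : Finset ℤ) :
    hfold (a + b) A = hfold a A + hfold b A := by
  induction a with
  | zero =>
      rw [Nat.zero_add]
      change hfold b A = ({0} : Finset ℤ) + hfold b A
      rw [Finset.singleton_add]
      simp
  | succ n ih =>
      rw [Nat.succ_add]
      change A + hfold (n + b) A = (A + hfold n A) + hfold b A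
      rw [ih, add_assoc]

theorem stmt2 (x r y : ℤ) (h : ℕ) (hx : 2 ≤ x) (hr : 0 ≤ r)
    (hxy : x + r ≤ y - 1) (A : Finset ℤ)
    (hA : A = Icc 0 (x - 1) ∪ Icc (x + r) y) (hcard : 4 ≤ A.card)
    (hh : r + 1 ≤ (h : ℤ)) :
    hfold h A = Icc 0 ((h : ℤ) * y) := by
  have hy : 0 ≤ y := by linarith
  apply Finset.Subset.antisymm
  · have hsub : A ⊆ Icc 0 y := by
      rw [hA]
      apply Finset.union_subset <;> apply Finset.Icc_subset_Icc <;> linarith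
    have := hfold_mono h hsub
    rwa [hfold_Icc h 0 y hy, mul_zero] at this
  · intro n hn
    rw [mem_Icc] at hn
    obtain ⟨hn0, hny⟩ := hn
    have hxr : (0:ℤ) < x + r := by linarith
    set j : ℕ := min h (n / (x + r)).toNat with hjdef
    have hjh : j ≤ h := min_le_left _ _
    have hjez : (0:ℤ) ≤ n / (x + r) := Int.ediv_nonneg hn0 (le_of_lt hxr)
    have hjle : (j : ℤ) ≤ n / (x + r) := by
      have := min_le_right h (n / (x + r)).toNat
      have h2 : ((min h (n / (x + r)).toNat : ℕ) : ℤ) ≤ ((n / (x + r)).toNat : ℤ) :=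
        Int.ofNat_le.mpr this
      rwa [Int.toNat_of_nonneg hjez] at h2
    -- lower bound : j*(x+r) ≤ n
    have hjlow : (j : ℤ) * (x + r) ≤ n := by
      have := (Int.le_ediv_iff_mul_le hxr).mp hjle
      linarith
    -- upper bound : n ≤ j*y + (h-j)*(x-1)
    have hjup : n ≤ (j : ℤ) * y + ((h : ℤ) - (j : ℤ)) * (x - 1) := by
      rcases eq_or_lt_of_le hjh with heq | hlt
      · -- j = h
        have : (j : ℤ) = (h : ℤ) := by exact_mod_cast congrArg (Nat.cast (R := ℤ)) heq
        rw [this]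
        have hj0 : (0:ℤ) ≤ (h : ℤ) := Int.natCast_nonneg h
        nlinarith
      · -- j < h, so j = n/(x+r)
        have hje : (j : ℤ) = n / (x + r) := by
          have : j = (n / (x + r)).toNat := by omega
          rw [this, Int.toNat_of_nonneg hjez]
        have hnlt : n < ((j : ℤ) + 1) * (x + r) := by
          rw [hje]
          exact Int.lt_ediv_add_one_mul_self n hxr
        have hj0 : (0:ℤ) ≤ (j : ℤ) := Int.natCast_nonneg j
        have hjlt : (j : ℤ) + 1 ≤ (h : ℤ) := by exact_mod_cast hlt
        nlinarith [mul_nonneg hj0 (by linarith : (0:ℤ) ≤ y - (x + r + 1)),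
          mul_nonneg (by linarith : (0:ℤ) ≤ (h : ℤ) - (j : ℤ) - 1) (by linarith : (0:ℤ) ≤ x - 2)]
    -- show n ∈ hfold h A
    have hdecomp : hfold h A = hfold j A + hfold (h - j) A := by
      rw [← hfold_add, Nat.add_sub_cancel' hjh]
    have hsub1 : Icc (x + r) y ⊆ A := by rw [hA]; exact Finset.subset_union_right
    have hsub2 : Icc 0 (x - 1) ⊆ A := by rw [hA]; exact Finset.subset_union_left
    have hkey : Icc ((j:ℤ) * (x + r)) ((j:ℤ) * y) + Icc 0 (((h - j : ℕ) : ℤ) * (x - 1))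
        ⊆ hfold h A := by
      rw [hdecomp]
      apply Finset.add_subset_add
      · rw [← hfold_Icc j (x + r) y (by linarith)]
        exact hfold_mono j hsub1
      · have : Icc (0:ℤ) (((h - j : ℕ) : ℤ) * (x - 1)) =
            Icc (((h - j : ℕ) : ℤ) * 0) (((h - j : ℕ) : ℤ) * (x - 1)) := by rw [mul_zero]
        rw [this, ← hfold_Icc (h - j) 0 (x - 1) (by linarith)]
        exact hfold_mono (h - j) hsub2
    apply hkey
    have hcast : ((h - j : ℕ) : ℤ) = (h : ℤ) - (j : ℤ) := by
      exact_mod_cast Int.ofNat_sub hjh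
    rw [IccAddIcc _ _ _ _ (by nlinarith [Int.natCast_nonneg j] : (j:ℤ) * (x + r) ≤ (j:ℤ) * y)
      (by rw [hcast]; nlinarith [Int.natCast_nonneg j, Int.natCast_nonneg h,
        (by exact_mod_cast hjh : (j:ℤ) ≤ (h:ℤ))] : (0:ℤ) ≤ ((h - j : ℕ) : ℤ) * (x - 1))]
    rw [mem_Icc, hcast]
    constructor <;> linarith
end

section
/- Let A = {a_0, a_1, ..., a_{k-1}} be a set of integers with 0 = a_0 < a_1 < ... < a_{k-1}, and let 0 < a_t ≤ m ≤ h·a_t - 1 for some index t and integer m. If a_t + r ∈ 2A, where r is the least nonnegative residue of m modulo a_t, then m ∈ hA. -/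
open Finset Pointwise

lemma hfold_zero_mem (A : Finset ℤ) (h0 : (0:ℤ) ∈ A) : ∀ n, (0:ℤ) ∈ hfold n A
  | 0 => by simp [hfold]
  | n + 1 => by
      have := hfold_zero_mem A h0 n
      have : (0:ℤ) + 0 ∈ A + hfold n A := Finset.add_mem_add h0 this
      simpa [hfold] using this

lemma hfold_add_mem (A : Finset ℤ) : ∀ j k (x y : ℤ), x ∈ hfold j A → y ∈ hfold k A →
    x + y ∈ hfold (j + k) A
  | 0, k, x, y, hx, hy => by
      simp [hfold] at hx; subst hx; simpa using hy
  | j + 1, k, x, y, hx, hy => by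
      simp only [hfold, Finset.mem_add] at hx
      obtain ⟨b, hb, c, hc, rfl⟩ := hx
      have := hfold_add_mem A j k c y hc hy
      have : b + (c + y) ∈ A + hfold (j + k) A := Finset.add_mem_add hb this
      have h2 : b + (c + y) ∈ hfold (j + k + 1) A := by simpa [hfold] using this
      have : j + 1 + k = j + k + 1 := by ring
      rw [this]
      simpa [add_assoc] using h2

lemma hfold_nsmul (A : Finset ℤ) (a : ℤ) (ha : a ∈ A) : ∀ k : ℕ, (k : ℤ) * a ∈ hfold k A
  | 0 => by simp [hfold]
  | k + 1 => by
      have := hfold_nsmul A a ha k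
      have h2 : a + (k : ℤ) * a ∈ A + hfold k A := Finset.add_mem_add ha this
      have : ((k : ℤ) + 1) * a = a + (k : ℤ) * a := by ring
      push_cast
      rw [this]
      simpa [hfold] using h2

theorem stmt4 (A : Finset ℤ) (h : ℕ) (h0 : (0 : ℤ) ∈ A)
    (hnn : ∀ a ∈ A, 0 ≤ a) (a : ℤ) (ha : a ∈ A) (hapos : 0 < a)
    (m : ℤ) (hm1 : a ≤ m) (hm2 : m ≤ (h : ℤ) * a - 1)
    (hres : a + m % a ∈ A + A) :
    m ∈ hfold h A := by
  set q : ℤ := m / a with hq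
  have hq1 : 1 ≤ q := by
    rw [hq]
    exact Int.le_ediv_iff_mul_le hapos |>.2 (by linarith)
  have hqh : q < (h : ℤ) := by
    rw [hq]
    exact Int.ediv_lt_iff_lt_mul hapos |>.2 (by linarith)
  set k : ℕ := (q - 1).toNat with hk
  have hkq : (k : ℤ) = q - 1 := Int.toNat_of_nonneg (by linarith)
  have hkh : k + 2 ≤ h := by
    have : (k : ℤ) + 2 ≤ (h : ℤ) := by rw [hkq]; linarith
    exact_mod_cast this
  -- a + m % a ∈ hfold 2 A
  have h2 : a + m % a ∈ hfold 2 A := by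
    rw [Finset.mem_add] at hres
    obtain ⟨b, hb, c, hc, hbc⟩ := hres
    have : b + (c + 0) ∈ A + (A + hfold 0 A) :=
      Finset.add_mem_add hb (Finset.add_mem_add hc (by simp [hfold]))
    simpa [hfold, hbc, add_assoc] using this
  have hka : (k : ℤ) * a ∈ hfold k A := hfold_nsmul A a ha k
  have hsum : (k : ℤ) * a + (a + m % a) ∈ hfold (k + 2) A :=
    hfold_add_mem A k 2 _ _ hka h2
  have hzero : (0 : ℤ) ∈ hfold (h - (k + 2)) A := hfold_zero_mem A h0 _
  have hfin : (k : ℤ) * a + (a + m % a) + 0 ∈ hfold ((k + 2) + (h - (k + 2))) A :=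
    hfold_add_mem A _ _ _ _ hsum hzero
  rw [Nat.add_sub_cancel' hkh] at hfin
  have hm : m = (k : ℤ) * a + (a + m % a) + 0 := by
    have := Int.mul_ediv_add_emod m a
    rw [hkq]; ring_nf; linarith [Int.mul_ediv_add_emod m a]
  rwa [hm]
end

section
/- Let x, y, h be positive integers with y ≥ 2x - 1. If A = {0} ∪ [x, y], then the h-fold sumset hA equals {0} ∪ [x, hy]. -/
/-!
Adding `{0} ∪ [x, y]` to `{0} ∪ [x, m]` with `m ≥ x` gives `{0} ∪ [x, y] ∪ [x, m] ∪ [2x, y + m]`,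
and `y ≥ 2x - 1` leaves no gap between the pieces, so the sum is `{0} ∪ [x, m + y]`.
Induction on `h` then adds one copy of `A` at a time.
-/

open Finset Pointwise

lemma hfold_one (A : Finset ℤ) : hfold 1 A = A :=
  add_zero A

lemma insert_zero_Icc_add_insert_zero_Icc {x y m : ℤ} (hx : 0 < x) (hyx : 2 * x - 1 ≤ y)
    (hxm : x ≤ m) :
    insert 0 (Icc x y) + insert 0 (Icc x m) = insert 0 (Icc x (m + y)) := by
  ext z
  simp only [mem_add, mem_insert, mem_Icc]
  constructor
  · rintro ⟨a, ha, b, hb, rfl⟩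
    rcases ha with rfl | ha <;> rcases hb with rfl | hb <;> omega
  · rintro (rfl | hz)
    · exact ⟨0, .inl rfl, 0, .inl rfl, rfl⟩
    by_cases hzy : z ≤ y
    · exact ⟨z, .inr ⟨hz.1, hzy⟩, 0, .inl rfl, add_zero z⟩
    by_cases hzm : z - x ≤ m
    · exact ⟨x, .inr ⟨le_rfl, by omega⟩, z - x, .inr ⟨by omega, hzm⟩, by ring⟩
    · exact ⟨z - m, .inr ⟨by omega, by omega⟩, m, .inr ⟨hxm, le_rfl⟩, by ring⟩

theorem stmt5_general (x y : ℤ) (h : ℕ) (hx : 0 < x)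
    (hyx : 2 * x - 1 ≤ y) (A : Finset ℤ)
    (hA : A = insert 0 (Icc x y)) :
    hfold h A = insert 0 (Icc x ((h : ℤ) * y)) := by
  subst hA
  induction h with
  | zero => simp [hfold, Icc_eq_empty_of_lt hx]
  | succ n ih =>
    rcases n.eq_zero_or_pos with rfl | hn
    · simp [hfold_one]
    have hxn : x ≤ (n : ℤ) * y := by
      have : (1 : ℤ) ≤ n := by exact_mod_cast hn
      nlinarith
    rw [hfold, ih, insert_zero_Icc_add_insert_zero_Icc hx hyx hxn, Nat.cast_succ, add_one_mul]

theorem stmt5 (x y : ℤ) (h : ℕ) (hx : 0 < x) (hy : 0 < y) (hh : 0 < h)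
    (hyx : 2 * x - 1 ≤ y) (A : Finset ℤ)
    (hA : A = insert 0 (Icc x y)) :
    hfold h A = insert 0 (Icc x ((h : ℤ) * y)) :=
  stmt5_general x y h hx hyx A hA
end

section
/- Let x, y, h be positive integers with y ≥ 2x - 1. If A = [0, y-x] ∪ {y}, then the h-fold sumset hA equals [0, hy - x] ∪ {hy}. -/
open Finset Pointwise

lemma aux_step (x y : ℤ) (n : ℕ) (hx : 0 < x) (hy : 0 < y) (hn : 0 < n)
    (hyx : 2 * x - 1 ≤ y) :
    (Icc 0 (y - x) ∪ {y}) + (Icc 0 ((n : ℤ) * y - x) ∪ {(n : ℤ) * y}) =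
      Icc 0 (((n : ℤ) + 1) * y - x) ∪ {((n : ℤ) + 1) * y} := by
  have hn1 : (1 : ℤ) ≤ (n : ℤ) := by exact_mod_cast hn
  have hny : y ≤ (n : ℤ) * y := le_mul_of_one_le_left hy.le hn1
  ext z
  simp only [Finset.mem_add, Finset.mem_union, Finset.mem_Icc, Finset.mem_singleton]
  rw [show ((n : ℤ) + 1) * y = (n : ℤ) * y + y from by ring]
  constructor
  · rintro ⟨u, hu, v, hv, rfl⟩
    rcases hu with hu | rfl <;> rcases hv with hv | rfl <;> omega
  · rintro (⟨h0, h1⟩ | rfl)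
    · by_cases hc : z ≤ (y - x) + ((n : ℤ) * y - x)
      · exact ⟨max 0 (z - ((n : ℤ)*y - x)), Or.inl ⟨by omega, by omega⟩,
          z - max 0 (z - ((n : ℤ)*y - x)), Or.inl ⟨by omega, by omega⟩, by omega⟩
      · exact ⟨z - (n : ℤ)*y, Or.inl ⟨by omega, by omega⟩, (n : ℤ)*y, Or.inr rfl, by omega⟩
    · exact ⟨y, Or.inr rfl, (n : ℤ)*y, Or.inr rfl, by omega⟩

theorem stmt6 (x y : ℤ) (h : ℕ) (hx : 0 < x) (hy : 0 < y) (hh : 0 < h)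
    (hyx : 2 * x - 1 ≤ y) (A : Finset ℤ)
    (hA : A = Icc 0 (y - x) ∪ {y}) :
    hfold h A = Icc 0 ((h : ℤ) * y - x) ∪ {(h : ℤ) * y} := by
  subst hA
  induction h with
  | zero => omega
  | succ n ih =>
    rcases Nat.eq_zero_or_pos n with rfl | hn
    · show (Icc 0 (y - x) ∪ {y}) + hfold 0 _ = _
      simp [hfold, Finset.add_singleton]
    · have : hfold (n + 1) (Icc 0 (y - x) ∪ {y}) =
          (Icc 0 (y - x) ∪ {y}) + hfold n (Icc 0 (y - x) ∪ {y}) := rfl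
      rw [this, ih hn, aux_step x y n hx hy hn hyx]
      push_cast
      ring_nf
end

section
/- Let h ≥ 2 and k ≥ 5 be integers and let A = [0, k+2] \ {1, 2, 3} = {0} ∪ [4, k+2]. Then hA = {0} ∪ [4, h(k+2)] and |hA| = h(k+2) - 2. -/
open Finset Pointwise

lemma hfold_aux (k : ℕ) (hk : 5 ≤ k) :
    ∀ h : ℕ, 1 ≤ h →
      hfold h (insert 0 (Icc 4 ((k : ℤ) + 2)))
        = insert 0 (Icc 4 ((h : ℤ) * ((k : ℤ) + 2))) := by
  intro h
  induction h with
  | zero => omega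
  | succ n ih =>
    intro _
    rcases Nat.eq_zero_or_pos n with hn | hn
    · subst hn
      show insert 0 (Icc 4 ((k : ℤ) + 2)) + ({0} : Finset ℤ) = _
      have : ({0} : Finset ℤ) = 0 := rfl
      rw [this, add_zero]
      norm_num
    · show insert 0 (Icc 4 ((k : ℤ) + 2)) + hfold n _ = _
      rw [ih hn]
      have hk' : (5 : ℤ) ≤ (k : ℤ) := by exact_mod_cast hk
      have hn' : (1 : ℤ) ≤ (n : ℤ) := by exact_mod_cast hn
      have hM : (7 : ℤ) ≤ (n : ℤ) * ((k : ℤ) + 2) := by nlinarith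
      have hXY : Icc (4 : ℤ) ((k : ℤ) + 2) + Icc (4 : ℤ) ((n : ℤ) * ((k : ℤ) + 2))
          = Icc (8 : ℤ) ((k : ℤ) + 2 + (n : ℤ) * ((k : ℤ) + 2)) := by
        ext x
        simp only [Finset.mem_add, Finset.mem_Icc]
        constructor
        · rintro ⟨a, ⟨ha1, ha2⟩, b, ⟨hb1, hb2⟩, rfl⟩; omega
        · rintro ⟨h1, h2⟩
          by_cases hc : x ≤ (k : ℤ) + 6
          · exact ⟨x - 4, ⟨by omega, by omega⟩, 4, ⟨by omega, by omega⟩, by ring⟩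
          · exact ⟨(k : ℤ) + 2, ⟨by omega, by omega⟩, x - ((k : ℤ) + 2),
              ⟨by omega, by omega⟩, by ring⟩
      have h0 : ({0} : Finset ℤ) = 0 := rfl
      simp only [Finset.insert_eq, Finset.union_add, Finset.add_union, h0,
        zero_add, add_zero, hXY]
      ext x
      simp only [Finset.mem_union, Finset.mem_insert, Finset.mem_singleton,
        Finset.mem_zero, Finset.mem_Icc]
      push_cast
      have hsucc : ((n : ℤ) + 1) * ((k : ℤ) + 2) = (k : ℤ) + 2 + (n : ℤ) * ((k : ℤ) + 2) := by
        ring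
      rw [hsucc]
      generalize (n : ℤ) * ((k : ℤ) + 2) = M at hM ⊢
      omega

theorem stmt7 (h k : ℕ) (hh : 2 ≤ h) (hk : 5 ≤ k) (A : Finset ℤ)
    (hA : A = insert 0 (Icc 4 ((k : ℤ) + 2))) :
    hfold h A = insert 0 (Icc 4 ((h : ℤ) * ((k : ℤ) + 2))) ∧
      (hfold h A).card = h * (k + 2) - 2 := by
  subst hA
  have key := hfold_aux k hk h (by omega)
  refine ⟨key, ?_⟩
  rw [key]
  have hk' : (5 : ℤ) ≤ (k : ℤ) := by exact_mod_cast hk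
  have hh' : (2 : ℤ) ≤ (h : ℤ) := by exact_mod_cast hh
  have h0 : (0 : ℤ) ∉ Icc (4 : ℤ) ((h : ℤ) * ((k : ℤ) + 2)) := by
    simp
  rw [Finset.card_insert_of_notMem h0, Int.card_Icc]
  have hbig : (14 : ℤ) ≤ (h : ℤ) * ((k : ℤ) + 2) := by nlinarith
  have : ((h : ℤ) * ((k : ℤ) + 2) + 1 - 4).toNat = h * (k + 2) - 3 := by
    have : (h : ℤ) * ((k : ℤ) + 2) = ((h * (k + 2) : ℕ) : ℤ) := by push_cast; ring
    rw [this]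
    omega
  rw [this]
  have : 14 ≤ h * (k + 2) := by nlinarith
  omega
end
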